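/- Let G be a graph that splits along a path P of length l into induced subgraphs G_1 and G_2, where every interior vertex of P has degree 2 in G, and G_1 is bipartite. Then I_G = (I_{G_1} + I_{G_2}) : f^∞, where f is the squarefree monomial equal to the product of the edge variables of P with even indices (when the edges of P are labelled h_1,…,h_l along the path). -/

import Mathlib

open MvPolynomial

/-!
`I_{G₁} + I_{G₂} ⊆ I_G`, and `I_G` is a prime ideal not containing the monomial `f`, so the
saturation lies in `I_G`. Conversely `I_G` is spanned by the binomials `x^a - x^b` with `a`, `b`
of equal vertex degrees. Split `a = a₁ + a₂`, `b = b₁ + b₂` into edges of `G₁` and the rest. As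
`G₁` and `G₂` meet only along `P` and the interior vertices of `P` have no other edges, the
degrees of `a₁` and `b₁` agree except at the two ends of `P`. Weighting the two colour classes of
`G₁` by `±1`, the signed degree sums of `a₁` and `b₁` vanish, so the discrepancy at the far end
is determined by the discrepancy `n` at `p 0`: the difference of the degrees of `a₁` and `b₁` is
exactly `n` times the degree difference of the even and the odd edges of `P`. Hence
`a₁ + n·odd` and `b₁ + n·even` are balanced in `G₁`, `a₂ + n·even` and `b₂ + n·odd` are
balanced in `G₂`, and
`x^(a + n·odd) - x^(b + n·odd) = x^a₂ (x^(a₁ + n·odd) - x^(b₁ + n·even))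
  + x^b₁ (x^(a₂ + n·even) - x^(b₂ + n·odd))` puts `f^n (x^a - x^b)` in `I_{G₁} + I_{G₂}`.
-/

noncomputable def graphToricIdeal (K : Type*) [Field K] {V E : Type*} (ε : E → Sym2 V) :
    Ideal (MvPolynomial E K) :=
  RingHom.ker (MvPolynomial.aeval
    (fun e => Sym2.lift ⟨fun a b => (X a * X b : MvPolynomial V K),
      fun a b => by ring⟩ (ε e)) : MvPolynomial E K →ₐ[K] MvPolynomial V K)

namespace GraphToric

section Saturation

variable {R : Type*} [CommSemiring R]

def saturation (I : Ideal R) (f : R) : Ideal R where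
  carrier := {x | ∃ m : ℕ, f ^ m * x ∈ I}
  add_mem' := by
    rintro x y ⟨m, hx⟩ ⟨n, hy⟩
    refine ⟨m + n, ?_⟩
    have : f ^ (m + n) * (x + y) = f ^ n * (f ^ m * x) + f ^ m * (f ^ n * y) := by ring
    rw [this]
    exact I.add_mem (I.mul_mem_left _ hx) (I.mul_mem_left _ hy)
  zero_mem' := ⟨0, by simp⟩
  smul_mem' := by
    rintro r x ⟨m, hx⟩
    exact ⟨m, by simpa [mul_left_comm] using I.mul_mem_left r hx⟩

lemma saturation_le_of_isPrime {I P : Ideal R} {f : R} (hP : P.IsPrime) (hI : I ≤ P)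
    (hf : f ∉ P) : saturation I f ≤ P := by
  rintro x ⟨m, hm⟩
  exact (hP.mem_or_mem (hI hm)).resolve_left fun h => hf (hP.mem_of_pow_mem m h)

end Saturation

section Degrees

variable {V E : Type*} (ε : E → Sym2 V)

noncomputable def incidence (e : E) : V →₀ ℕ :=
  Sym2.lift ⟨fun a b => Finsupp.single a 1 + Finsupp.single b 1, fun _ _ => add_comm _ _⟩ (ε e)

lemma incidence_eq {e : E} {x y : V} (h : ε e = s(x, y)) :
    incidence ε e = Finsupp.single x 1 + Finsupp.single y 1 := by
  rw [incidence, h, Sym2.lift_mk]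

lemma incidence_apply_eq_zero {e : E} {w : V} (h : w ∉ ε e) : incidence ε e w = 0 := by
  obtain ⟨⟨x, y⟩, hxy⟩ := Sym2.mk_surjective (ε e)
  rw [← hxy] at h
  rw [incidence_eq ε hxy.symm]
  simp only [Function.uncurry_apply_pair, Sym2.mem_iff, not_or] at h
  simp [Ne.symm h.1, Ne.symm h.2]

noncomputable def degrees : (E →₀ ℕ) →ₗ[ℕ] (V →₀ ℕ) :=
  Finsupp.linearCombination ℕ (incidence ε)

lemma degrees_apply_eq_zero {u : E →₀ ℕ} {w : V} (h : ∀ e ∈ u.support, w ∉ ε e) :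
    degrees ε u w = 0 := by
  rw [degrees, Finsupp.linearCombination_apply, Finsupp.sum_apply]
  exact Finset.sum_eq_zero fun e he => by simp [incidence_apply_eq_zero ε (h e he)]

lemma degrees_filter_add_filter_not (u : E →₀ ℕ) (Q : E → Prop) [DecidablePred Q] :
    degrees ε (u.filter Q) + degrees ε (u.filter fun e => ¬ Q e) = degrees ε u := by
  rw [← map_add, Finsupp.filter_add_filter_not]

lemma degrees_filter_apply_eq_zero (u : E →₀ ℕ) {Q : E → Prop} [DecidablePred Q] {w : V}
    (h : ∀ e, w ∈ ε e → ¬ Q e) : degrees ε (u.filter Q) w = 0 :=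
  degrees_apply_eq_zero ε fun e he hw =>
    h e hw (by rw [Finsupp.support_filter, Finset.mem_filter] at he; exact he.2)

lemma linearCombination_degrees_eq_zero {σ : V → ℤ} {u : E →₀ ℕ}
    (hσ : ∀ e ∈ u.support, ∀ x y, ε e = s(x, y) → σ x + σ y = 0) :
    Finsupp.linearCombination ℕ σ (degrees ε u) = 0 := by
  rw [degrees, Finsupp.linearCombination_apply ℕ u, map_finsuppSum]
  refine Finset.sum_eq_zero fun e he => ?_
  obtain ⟨⟨x, y⟩, hxy⟩ := Sym2.mk_surjective (ε e)
  dsimp only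
  rw [map_nsmul, incidence_eq ε hxy.symm, map_add, Finsupp.linearCombination_single,
    Finsupp.linearCombination_single, one_smul, one_smul, hσ e he x y hxy.symm, smul_zero]

end Degrees

lemma linearCombination_sub_linearCombination {V : Type*} (σ : V → ℤ) {x y : V →₀ ℕ} {a b : V}
    (hab : a ≠ b) (h : ∀ w, w ≠ a → w ≠ b → x w = y w) :
    Finsupp.linearCombination ℕ σ x - Finsupp.linearCombination ℕ σ y =
      ((x a : ℤ) - y a) * σ a + ((x b : ℤ) - y b) * σ b := by
  classical
  have hsum (z : V →₀ ℕ) (hz : z.support ⊆ x.support ∪ y.support) :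
      Finsupp.linearCombination ℕ σ z = ∑ w ∈ x.support ∪ y.support, (z w : ℤ) * σ w := by
    rw [Finsupp.linearCombination_apply, Finsupp.sum_of_support_subset z hz _ (by simp)]
    simp only [nsmul_eq_mul]
  rw [hsum x Finset.subset_union_left, hsum y Finset.subset_union_right,
    ← Finset.sum_sub_distrib, Finset.sum_eq_add a b hab]
  · ring
  · intro w _ hw
    rw [h w hw.1 hw.2, sub_self]
  all_goals
    intro hw
    simp only [Finset.mem_union, Finsupp.mem_support_iff, not_or, not_not] at hw
    simp [hw.1, hw.2]

section ToricIdeal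

variable {V E : Type*} (K : Type*) [Field K] (ε : E → Sym2 V)

noncomputable def edgeMonomial (e : E) : MvPolynomial V K :=
  Sym2.lift ⟨fun a b => X a * X b, fun _ _ => mul_comm _ _⟩ (ε e)

lemma graphToricIdeal_eq_ker : graphToricIdeal K ε = RingHom.ker (aeval (edgeMonomial K ε)) :=
  rfl

lemma edgeMonomial_eq_monomial (e : E) : edgeMonomial K ε e = monomial (incidence ε e) 1 := by
  obtain ⟨⟨x, y⟩, hxy⟩ := Sym2.mk_surjective (ε e)
  rw [edgeMonomial, incidence, ← hxy]
  simp [X, monomial_mul]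

lemma aeval_edgeMonomial_monomial (u : E →₀ ℕ) (c : K) :
    aeval (edgeMonomial K ε) (monomial u c) = monomial (degrees ε u) c := by
  simp only [aeval_monomial, edgeMonomial_eq_monomial, monomial_pow, one_pow, degrees,
    Finsupp.linearCombination_apply, monomial_finsupp_sum_index, algebraMap_eq]

lemma coeff_aeval_edgeMonomial [DecidableEq V] (g : MvPolynomial E K) (d : V →₀ ℕ) :
    coeff d (aeval (edgeMonomial K ε) g) = ∑ u ∈ g.support with degrees ε u = d, coeff u g := by
  conv_lhs => rw [g.as_sum]
  simp only [map_sum, aeval_edgeMonomial_monomial, coeff_sum, coeff_monomial, Finset.sum_filter]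

lemma monomial_sub_monomial_mem {u v : E →₀ ℕ} (h : degrees ε u = degrees ε v) :
    monomial u (1 : K) - monomial v 1 ∈ graphToricIdeal K ε := by
  rw [graphToricIdeal_eq_ker, RingHom.mem_ker, map_sub, aeval_edgeMonomial_monomial,
    aeval_edgeMonomial_monomial, h, sub_self]

theorem graphToricIdeal_le {J : Ideal (MvPolynomial E K)}
    (hJ : ∀ u v, degrees ε u = degrees ε v → monomial u (1 : K) - monomial v 1 ∈ J) :
    graphToricIdeal K ε ≤ J := by
  classical
  intro g hg
  rw [graphToricIdeal_eq_ker, RingHom.mem_ker] at hg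
  -- compare each term of `g` with a fixed representative of its fibre under `degrees`
  set r := Function.invFun (degrees ε)
  have hr (u : E →₀ ℕ) : degrees ε (r (degrees ε u)) = degrees ε u :=
    Function.invFun_eq ⟨u, rfl⟩
  have hfibres : ∑ u ∈ g.support, monomial (r (degrees ε u)) (coeff u g) = 0 := by
    rw [← Finset.sum_fiberwise_of_maps_to (t := g.support.image (degrees ε))
      (fun u hu => Finset.mem_image_of_mem _ hu)]
    refine Finset.sum_eq_zero fun d _ => ?_
    rw [Finset.sum_congr rfl fun u hu => by rw [(Finset.mem_filter.mp hu).2],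
      ← map_sum, ← coeff_aeval_edgeMonomial, hg, coeff_zero, map_zero]
  have hg_eq : g = ∑ u ∈ g.support,
      C (coeff u g) * (monomial u 1 - monomial (r (degrees ε u)) 1) := by
    simp only [mul_sub, C_mul_monomial, mul_one, Finset.sum_sub_distrib, hfibres, sub_zero]
    exact g.as_sum
  rw [hg_eq]
  exact J.sum_mem fun u _ => J.mul_mem_left _ (hJ _ _ (hr u).symm)

lemma graphToricIdeal_isPrime : (graphToricIdeal K ε).IsPrime :=
  RingHom.ker_isPrime _

lemma monomial_notMem_graphToricIdeal (u : E →₀ ℕ) : monomial u (1 : K) ∉ graphToricIdeal K ε := by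
  rw [graphToricIdeal_eq_ker, RingHom.mem_ker, aeval_edgeMonomial_monomial]
  exact (monomial_eq_zero.not).mpr one_ne_zero

section Subgraph

variable (P : E → Prop)

noncomputable def subgraphToricIdeal : Ideal (MvPolynomial E K) :=
  Ideal.map (rename (Subtype.val : Subtype P → E)).toRingHom
    (graphToricIdeal K fun e : Subtype P => ε e)

lemma subgraphToricIdeal_le : subgraphToricIdeal K ε P ≤ graphToricIdeal K ε := by
  rw [subgraphToricIdeal, Ideal.map_le_iff_le_comap]
  intro g hg
  rw [graphToricIdeal_eq_ker, RingHom.mem_ker] at hg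
  rw [Ideal.mem_comap, graphToricIdeal_eq_ker, RingHom.mem_ker]
  exact (aeval_rename Subtype.val (edgeMonomial K ε) g).trans hg

lemma mem_subgraphToricIdeal {g : MvPolynomial E K} (hg : g ∈ graphToricIdeal K ε)
    (hvars : ∀ e ∈ g.vars, P e) : g ∈ subgraphToricIdeal K ε P := by
  obtain ⟨q, rfl⟩ := exists_rename_eq_of_vars_subset_range g Subtype.val
    Subtype.val_injective fun e he => ⟨⟨e, hvars e he⟩, rfl⟩
  refine Ideal.mem_map_of_mem _ (?_ : q ∈ graphToricIdeal K fun e : Subtype P => ε e)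
  rw [graphToricIdeal_eq_ker, RingHom.mem_ker] at hg ⊢
  exact (aeval_rename Subtype.val (edgeMonomial K ε) q).symm.trans hg

lemma monomial_sub_monomial_mem_subgraphToricIdeal {u v : E →₀ ℕ}
    (h : degrees ε u = degrees ε v) (hu : ∀ e ∈ u.support, P e) (hv : ∀ e ∈ v.support, P e) :
    monomial u (1 : K) - monomial v 1 ∈ subgraphToricIdeal K ε P := by
  classical
  refine mem_subgraphToricIdeal K ε P (monomial_sub_monomial_mem K ε h) fun e he => ?_
  rcases Finset.mem_union.mp (vars_sub_subset _ he) with he | he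
  · exact hu e (by rwa [vars_monomial one_ne_zero] at he)
  · exact hv e (by rwa [vars_monomial one_ne_zero] at he)

end Subgraph

end ToricIdeal

lemma sum_fin_castSucc_sub_succ {M : Type*} [AddCommGroup M] :
    ∀ {n : ℕ} (f : Fin (n + 1) → M), ∑ i : Fin n, (f i.castSucc - f i.succ) = f 0 - f (Fin.last n)
  | 0, f => by
    rw [Finset.univ_eq_empty, Finset.sum_empty]
    exact (sub_self _).symm
  | n + 1, f => by
    have ih := sum_fin_castSucc_sub_succ (f ∘ Fin.castSucc)
    simp only [Function.comp_apply, Fin.castSucc_zero] at ih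
    rw [Fin.sum_univ_castSucc]
    simp_rw [Fin.succ_castSucc]
    rw [ih]
    abel

section Path

variable {V E : Type*} {l : ℕ} (p : Fin (l + 1) → V)

lemma apply_path_eq_neg_one_pow_mul {σ : V → ℤ} (hσ : ∀ t : Fin l, σ (p t.castSucc) + σ (p t.succ) = 0)
    (i : Fin (l + 1)) : σ (p i) = (-1) ^ (i : ℕ) * σ (p 0) := by
  induction i using Fin.induction with
  | zero => simp
  | succ t ih =>
    rw [Fin.val_castSucc] at ih
    rw [Fin.val_succ, pow_succ, mul_comm _ (-1 : ℤ), mul_assoc, ← ih]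
    linarith [hσ t]

noncomputable def pathEdges (pe : Fin l → E) (s : Finset (Fin l)) : E →₀ ℕ :=
  ∑ t ∈ s, Finsupp.single (pe t) 1

/-- Indices are `0`-based: these are the edges `h₂, h₄, …` of the paper. -/
noncomputable abbrev oddEdges (pe : Fin l → E) : E →₀ ℕ :=
  pathEdges pe (Finset.univ.filter fun t => Odd (t : ℕ))

noncomputable abbrev evenEdges (pe : Fin l → E) : E →₀ ℕ :=
  pathEdges pe (Finset.univ.filter fun t => ¬ Odd (t : ℕ))

lemma pathEdges_support {pe : Fin l → E} {s : Finset (Fin l)} {Q : E → Prop}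
    (hQ : ∀ t, Q (pe t)) : ∀ e ∈ (pathEdges pe s).support, Q e := by
  classical
  intro e he
  obtain ⟨t, -, ht⟩ := Finset.mem_biUnion.mp (Finsupp.support_finsetSum he)
  rw [Finset.mem_singleton.mp (Finsupp.support_single_subset ht)]
  exact hQ t

lemma monomial_pathEdges {R : Type*} [CommSemiring R] (pe : Fin l → E) (s : Finset (Fin l)) :
    monomial (pathEdges pe s) (1 : R) = ∏ t ∈ s, X (pe t) := by
  rw [pathEdges, monomial_sum_one]
  rfl

variable (ε : E → Sym2 V) {pe : Fin l → E}

lemma degrees_evenEdges_sub_oddEdges [DecidableEq V]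
    (hpe : ∀ t : Fin l, ε (pe t) = s(p t.castSucc, p t.succ)) (w : V) :
    (degrees ε (evenEdges pe) w : ℤ) - degrees ε (oddEdges pe) w =
      (if p 0 = w then 1 else 0) - (-1) ^ l * (if p (Fin.last l) = w then 1 else 0) := by
  set F : Fin l → ℤ := fun t => (if p t.castSucc = w then 1 else 0) + if p t.succ = w then 1 else 0
  set g : Fin (l + 1) → ℤ := fun i => (-1) ^ (i : ℕ) * if p i = w then 1 else 0
  have hdeg (s : Finset (Fin l)) :
      (degrees ε (∑ t ∈ s, Finsupp.single (pe t) 1) w : ℤ) = ∑ t ∈ s, F t := by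
    simp [F, degrees, map_sum, incidence_eq ε (hpe _), Finsupp.single_apply]
  have hstep (t : Fin l) : g t.castSucc - g t.succ = (-1) ^ (t : ℕ) * F t := by
    simp only [g, F, Fin.val_castSucc, Fin.val_succ, pow_succ]
    ring
  calc (degrees ε (evenEdges pe) w : ℤ) - degrees ε (oddEdges pe) w
      = ∑ t ∈ Finset.univ.filter (fun t : Fin l => ¬ Odd (t : ℕ)), (g t.castSucc - g t.succ)
        + ∑ t ∈ Finset.univ.filter (fun t : Fin l => Odd (t : ℕ)), (g t.castSucc - g t.succ) := by
        rw [evenEdges, oddEdges, pathEdges, pathEdges, hdeg, hdeg, sub_eq_add_neg,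
          ← Finset.sum_neg_distrib]
        congr 1 <;> refine Finset.sum_congr rfl fun t ht => ?_ <;>
          rw [Finset.mem_filter] at ht <;> rw [hstep]
        · rw [(Nat.not_odd_iff_even.mp ht.2).neg_one_pow, one_mul]
        · rw [ht.2.neg_one_pow, neg_one_mul]
    _ = g 0 - g (Fin.last l) := by
        rw [add_comm, Finset.sum_filter_add_sum_filter_not, sum_fin_castSucc_sub_succ]
    _ = _ := by simp [g]

lemma add_smul_degrees_oddEdges_eq (hpe : ∀ t : Fin l, ε (pe t) = s(p t.castSucc, p t.succ))
    (hp0 : p 0 ≠ p (Fin.last l)) {σ : V → ℤ}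
    (hσ : ∀ t : Fin l, σ (p t.castSucc) + σ (p t.succ) = 0) (hσ0 : σ (p 0) ≠ 0)
    {x y : V →₀ ℕ} (hxy : Finsupp.linearCombination ℕ σ x = Finsupp.linearCombination ℕ σ y)
    (hends : ∀ w, w ≠ p 0 → w ≠ p (Fin.last l) → x w = y w) (hle : y (p 0) ≤ x (p 0)) :
    x + (x (p 0) - y (p 0)) • degrees ε (oddEdges pe) =
      y + (x (p 0) - y (p 0)) • degrees ε (evenEdges pe) := by
  classical
  set α : ℤ := (x (p 0) : ℤ) - y (p 0) with hα
  -- equal signed sums tie the discrepancy at the far end of the path to the one at `p 0`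
  have hlast : (x (p (Fin.last l)) : ℤ) - y (p (Fin.last l)) = -(-1) ^ l * α := by
    have h := linearCombination_sub_linearCombination σ hp0 hends
    rw [hxy, sub_self, apply_path_eq_neg_one_pow_mul p hσ (Fin.last l), Fin.val_last, ← hα] at h
    have hsum : α + (-1) ^ l * ((x (p (Fin.last l)) : ℤ) - y (p (Fin.last l))) = 0 :=
      (mul_eq_zero.mp (by linear_combination -h : σ (p 0) * _ = 0)).resolve_left hσ0
    have hsq : ((-1 : ℤ) ^ l) ^ 2 = 1 := by rw [← pow_mul, pow_mul', neg_one_sq, one_pow]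
    linear_combination (-1) ^ l * hsum - ((x (p (Fin.last l)) : ℤ) - y (p (Fin.last l))) * hsq
  ext w
  have hpath := degrees_evenEdges_sub_oddEdges p ε hpe w
  simp only [Finsupp.add_apply, Finsupp.smul_apply, smul_eq_mul]
  zify [hle]
  by_cases h0 : p 0 = w
  · subst h0
    simp only [if_pos, if_neg hp0.symm] at hpath
    linear_combination (-α) * hpath
  by_cases hl : p (Fin.last l) = w
  · subst hl
    simp only [if_neg h0, if_pos] at hpath
    linear_combination hlast - α * hpath
  · simp only [if_neg h0, if_neg hl] at hpath
    linear_combination (Int.natCast_inj.mpr (hends w (Ne.symm h0) (Ne.symm hl))) - α * hpath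

end Path

section Splitting

variable {V E : Type*} (K : Type*) [Field K] (ε : E → Sym2 V) {l : ℕ} {p : Fin (l + 1) → V}
  {pe : Fin l → E}

lemma add_eq_add_of_add_eq_add {M : Type*} [AddCommMonoid M] [IsRightCancelAdd M]
    {a₁ a₂ b₁ b₂ x y : M} (h : a₁ + a₂ = b₁ + b₂) (h₁ : a₁ + x = b₁ + y) : a₂ + y = b₂ + x := by
  apply add_right_cancel (b := a₁ + x)
  calc a₂ + y + (a₁ + x) = a₁ + a₂ + x + y := by abel
    _ = b₂ + x + (b₁ + y) := by rw [h]; abel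
    _ = b₂ + x + (a₁ + x) := by rw [h₁]

lemma forall_mem_support_add_nsmul {Q : E → Prop} {u v : E →₀ ℕ} (hu : ∀ e ∈ u.support, Q e)
    (hv : ∀ e ∈ v.support, Q e) (n : ℕ) : ∀ e ∈ (u + n • v).support, Q e := by
  classical
  intro e he
  rcases Finset.mem_union.mp (Finsupp.support_add he) with he | he
  · exact hu e he
  · exact hv e (Finsupp.support_smul he)

lemma monomial_add_sub_monomial_add {σ : Type*} (a₁ a₂ b₁ b₂ y z : σ →₀ ℕ) :
    monomial (a₁ + a₂ + z) (1 : K) - monomial (b₁ + b₂ + z) 1 =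
      monomial a₂ 1 * (monomial (a₁ + z) 1 - monomial (b₁ + y) 1) +
        monomial b₁ 1 * (monomial (a₂ + y) 1 - monomial (b₂ + z) 1) := by
  have hmul (u v : σ →₀ ℕ) : monomial (u + v) (1 : K) = monomial u 1 * monomial v 1 := by
    rw [monomial_mul, one_mul]
  simp only [hmul]
  ring

lemma degrees_filter_apply_eq {a b : E →₀ ℕ} (hab : degrees ε a = degrees ε b) (Q : E → Prop)
    [DecidablePred Q] {w : V} (hw : (∀ e, w ∈ ε e → Q e) ∨ ∀ e, w ∈ ε e → ¬ Q e) :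
    degrees ε (a.filter Q) w = degrees ε (b.filter Q) w := by
  rcases hw with hw | hw
  · have hnot (u : E →₀ ℕ) : degrees ε (u.filter fun e => ¬ Q e) w = 0 :=
      degrees_filter_apply_eq_zero ε u fun e he hQ => hQ (hw e he)
    have ha := DFunLike.congr_fun (degrees_filter_add_filter_not ε a Q) w
    have hb := DFunLike.congr_fun (degrees_filter_add_filter_not ε b Q) w
    simp only [Finsupp.add_apply, hnot, add_zero] at ha hb
    rw [ha, hb, hab]
  · rw [degrees_filter_apply_eq_zero ε a hw, degrees_filter_apply_eq_zero ε b hw]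

lemma exists_eq_pathEdge_of_mem (hp : Function.Injective p)
    (hpe : ∀ t : Fin l, ε (pe t) = s(p t.castSucc, p t.succ)) {i : Fin (l + 1)} (h0 : i ≠ 0)
    (hlast : i ≠ Fin.last l) (hdeg : Nat.card {e : E // p i ∈ ε e} = 2) {e : E}
    (he : p i ∈ ε e) : ∃ t, e = pe t := by
  have hprev : p i ∈ ε (pe (i.pred h0)) := by
    rw [hpe, Fin.succ_pred]; exact Sym2.mem_mk_right _ _
  have hnext : p i ∈ ε (pe (i.castPred hlast)) := by
    rw [hpe, Fin.castSucc_castPred]; exact Sym2.mem_mk_left _ _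
  have hne : pe (i.pred h0) ≠ pe (i.castPred hlast) := by
    intro h
    have hmem : p (i.pred h0).castSucc ∈ ε (pe (i.castPred hlast)) := by
      rw [← h, hpe]; exact Sym2.mem_mk_left _ _
    rw [hpe, Fin.castSucc_castPred, Sym2.mem_iff] at hmem
    have hi : (i : ℕ) ≠ 0 := Fin.val_ne_zero_iff.mpr h0
    rcases hmem with h' | h' <;>
    · have := congrArg Fin.val (hp h')
      simp only [Fin.val_castSucc, Fin.val_pred, Fin.val_succ, Fin.coe_castPred] at this
      omega
  have hfin : {e | p i ∈ ε e}.Finite :=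
    Set.finite_coe_iff.mp (Nat.finite_of_card_ne_zero (by rw [Set.coe_ofPred, hdeg]; norm_num))
  have hpair : {pe (i.pred h0), pe (i.castPred hlast)} = {e | p i ∈ ε e} := by
    refine Set.eq_of_subset_of_ncard_le
      (Set.insert_subset hprev (Set.singleton_subset_iff.mpr hnext)) ?_ hfin
    rw [Set.ncard_pair hne, ← Nat.card_coe_set_eq, Set.coe_ofPred, hdeg]
  rcases (hpair ▸ he : e ∈ ({pe (i.pred h0), pe (i.castPred hlast)} : Set E)) with rfl | rfl
  exacts [⟨_, rfl⟩, ⟨_, rfl⟩]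

lemma forall_or_forall_not_of_ne_ends {W₁ W₂ : Set V} (hp : Function.Injective p)
    (hpe : ∀ t : Fin l, ε (pe t) = s(p t.castSucc, p t.succ)) (hint : W₁ ∩ W₂ = Set.range p)
    (hedges : ∀ e : E, (∀ x ∈ ε e, x ∈ W₁) ∨ (∀ x ∈ ε e, x ∈ W₂))
    (hdeg : ∀ t : Fin (l + 1), t ≠ 0 → t ≠ Fin.last l → Nat.card {e : E // p t ∈ ε e} = 2)
    {w : V} (hw0 : w ≠ p 0) (hwl : w ≠ p (Fin.last l)) :
    (∀ e, w ∈ ε e → ∀ x ∈ ε e, x ∈ W₁) ∨ ∀ e, w ∈ ε e → ¬ ∀ x ∈ ε e, x ∈ W₁ := by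
  by_cases hw : w ∈ Set.range p
  · obtain ⟨i, rfl⟩ := hw
    have h0 : i ≠ 0 := by rintro rfl; exact hw0 rfl
    have hlast : i ≠ Fin.last l := by rintro rfl; exact hwl rfl
    left
    intro e he
    obtain ⟨t, rfl⟩ := exists_eq_pathEdge_of_mem ε hp hpe h0 hlast (hdeg i h0 hlast) he
    intro x hx
    rw [hpe, Sym2.mem_iff] at hx
    rcases hx with rfl | rfl <;> exact (hint.ge ⟨_, rfl⟩).1
  by_cases hw1 : w ∈ W₁
  · exact Or.inl fun e he =>
      (hedges e).resolve_right fun h₂ => hw (hint ▸ ⟨hw1, h₂ w he⟩)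
  · exact Or.inr fun e he h₁ => hw1 (h₁ w he)

theorem exists_monomial_sub_monomial_mem_sup {P₁ P₂ : E → Prop}
    (hpe : ∀ t : Fin l, ε (pe t) = s(p t.castSucc, p t.succ)) (hp0 : p 0 ≠ p (Fin.last l))
    (hsep : ∀ w, w ≠ p 0 → w ≠ p (Fin.last l) →
      (∀ e, w ∈ ε e → P₁ e) ∨ ∀ e, w ∈ ε e → ¬ P₁ e)
    (hP₂ : ∀ e, ¬ P₁ e → P₂ e) (hpath₁ : ∀ t, P₁ (pe t)) (hpath₂ : ∀ t, P₂ (pe t))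
    (c : V → Bool) (hc : ∀ e, P₁ e → ∀ x y, ε e = s(x, y) → c x ≠ c y)
    {a b : E →₀ ℕ} (hab : degrees ε a = degrees ε b) :
    ∃ n : ℕ, monomial (a + n • oddEdges pe) (1 : K) - monomial (b + n • oddEdges pe) 1 ∈
      subgraphToricIdeal K ε P₁ ⊔ subgraphToricIdeal K ε P₂ := by
  classical
  wlog hle : degrees ε (b.filter P₁) (p 0) ≤ degrees ε (a.filter P₁) (p 0) generalizing a b
  · obtain ⟨n, hn⟩ := this hab.symm (le_of_not_ge hle)
    exact ⟨n, by simpa using neg_mem hn⟩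
  set σ : V → ℤ := fun w => if c w then 1 else -1
  have hσ (e : E) (he : P₁ e) (x y : V) (hxy : ε e = s(x, y)) : σ x + σ y = 0 := by
    have := hc e he x y hxy
    cases hx : c x <;> cases hy : c y <;> simp_all [σ]
  set a₁ := a.filter P₁
  set a₂ := a.filter fun e => ¬ P₁ e
  set b₁ := b.filter P₁
  set b₂ := b.filter fun e => ¬ P₁ e
  set n := degrees ε a₁ (p 0) - degrees ε b₁ (p 0)
  have hsupp₁ (u : E →₀ ℕ) : ∀ e ∈ (u.filter P₁).support, P₁ e := fun e he => by
    rw [Finsupp.support_filter, Finset.mem_filter] at he; exact he.2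
  have hsupp₂ (u : E →₀ ℕ) : ∀ e ∈ (u.filter fun e => ¬ P₁ e).support, P₂ e := fun e he => by
    rw [Finsupp.support_filter, Finset.mem_filter] at he; exact hP₂ e he.2
  have h₁ : degrees ε (a₁ + n • oddEdges pe) = degrees ε (b₁ + n • evenEdges pe) := by
    rw [map_add, map_add, map_nsmul, map_nsmul]
    refine add_smul_degrees_oddEdges_eq p ε hpe hp0 (fun t => hσ _ (hpath₁ t) _ _ (hpe t))
      (by by_cases h : c (p 0) <;> simp [σ, h]) ?_ (fun w hw0 hwl =>
        degrees_filter_apply_eq ε hab P₁ (hsep w hw0 hwl)) hle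
    rw [linearCombination_degrees_eq_zero ε fun e he => hσ e (hsupp₁ a e he),
      linearCombination_degrees_eq_zero ε fun e he => hσ e (hsupp₁ b e he)]
  have h₂ : degrees ε (a₂ + n • evenEdges pe) = degrees ε (b₂ + n • oddEdges pe) := by
    rw [map_add, map_add] at h₁ ⊢
    refine add_eq_add_of_add_eq_add ?_ h₁
    rw [degrees_filter_add_filter_not, degrees_filter_add_filter_not, hab]
  refine ⟨n, ?_⟩
  rw [← Finsupp.filter_add_filter_not a P₁, ← Finsupp.filter_add_filter_not b P₁,
    monomial_add_sub_monomial_add K a₁ a₂ b₁ b₂ (n • evenEdges pe)]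
  exact add_mem
    (Ideal.mul_mem_left _ _ (Ideal.mem_sup_left (monomial_sub_monomial_mem_subgraphToricIdeal K ε
      P₁ h₁ (forall_mem_support_add_nsmul (hsupp₁ a) (pathEdges_support hpath₁) n)
      (forall_mem_support_add_nsmul (hsupp₁ b) (pathEdges_support hpath₁) n))))
    (Ideal.mul_mem_left _ _ (Ideal.mem_sup_right (monomial_sub_monomial_mem_subgraphToricIdeal K ε
      P₂ h₂ (forall_mem_support_add_nsmul (hsupp₂ a) (pathEdges_support hpath₂) n)
      (forall_mem_support_add_nsmul (hsupp₂ b) (pathEdges_support hpath₂) n))))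

end Splitting

end GraphToric

open GraphToric in
theorem toric_splittings_stmt19_general {V E : Type*} (K : Type*) [Field K]
    (ε : E → Sym2 V) (l : ℕ) (hl : 0 < l) (p : Fin (l + 1) → V) (hp : Function.Injective p)
    (pe : Fin l → E) (hpe : ∀ t : Fin l, ε (pe t) = s(p t.castSucc, p t.succ))
    (W₁ W₂ : Set V)
    (hint : W₁ ∩ W₂ = Set.range p)
    (hedges : ∀ e : E, (∀ x ∈ ε e, x ∈ W₁) ∨ (∀ x ∈ ε e, x ∈ W₂))
    (hdeg : ∀ t : Fin (l + 1), t ≠ 0 → t ≠ Fin.last l →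
      Nat.card {e : E // p t ∈ ε e} = 2)
    (hbip : ∃ c : V → Bool, ∀ e : E, (∀ x ∈ ε e, x ∈ W₁) →
      ∀ x y, ε e = s(x, y) → c x ≠ c y) :
    ∀ g : MvPolynomial E K,
      g ∈ graphToricIdeal K ε ↔
        ∃ m : ℕ,
          (∏ t ∈ Finset.univ.filter (fun t : Fin l => Odd (t : ℕ)), X (pe t)) ^ m * g ∈
            Ideal.map (MvPolynomial.rename
                  (Subtype.val : {e : E // ∀ x ∈ ε e, x ∈ W₁} → E)).toRingHom
                (graphToricIdeal K (fun e : {e : E // ∀ x ∈ ε e, x ∈ W₁} => ε e.val)) ⊔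
              Ideal.map (MvPolynomial.rename
                  (Subtype.val : {e : E // ∀ x ∈ ε e, x ∈ W₂} → E)).toRingHom
                (graphToricIdeal K (fun e : {e : E // ∀ x ∈ ε e, x ∈ W₂} => ε e.val)) := by
  set P₁ : E → Prop := fun e => ∀ x ∈ ε e, x ∈ W₁
  set P₂ : E → Prop := fun e => ∀ x ∈ ε e, x ∈ W₂
  obtain ⟨c, hc⟩ := hbip
  have hp0 : p 0 ≠ p (Fin.last l) := fun h => by simpa [Fin.ext_iff, hl.ne] using hp h
  have hpath (t : Fin l) : ∀ x ∈ ε (pe t), x ∈ W₁ ∩ W₂ := by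
    intro x hx
    rw [hpe, Sym2.mem_iff] at hx
    rcases hx with rfl | rfl <;> exact hint.ge ⟨_, rfl⟩
  have key : graphToricIdeal K ε = saturation
      (subgraphToricIdeal K ε P₁ ⊔ subgraphToricIdeal K ε P₂) (monomial (oddEdges pe) 1) := by
    refine le_antisymm (graphToricIdeal_le K ε fun a b hab => ?_)
      (saturation_le_of_isPrime (graphToricIdeal_isPrime K ε)
        (sup_le (subgraphToricIdeal_le K ε P₁) (subgraphToricIdeal_le K ε P₂))
        (monomial_notMem_graphToricIdeal K ε _))
    obtain ⟨n, hn⟩ := exists_monomial_sub_monomial_mem_sup K ε hpe hp0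
      (fun w => forall_or_forall_not_of_ne_ends ε hp hpe hint hedges hdeg)
      (fun e he => (hedges e).resolve_left he) (fun t x hx => (hpath t x hx).1)
      (fun t x hx => (hpath t x hx).2) c hc hab
    refine ⟨n, ?_⟩
    rwa [monomial_pow, one_pow, mul_sub, monomial_mul, monomial_mul, one_mul,
      add_comm (n • _) a, add_comm (n • _) b]
  intro g
  rw [← monomial_pathEdges, key]
  rfl

/-- Let `G` be a graph that splits along a path `P` of length `l ≥ 1`
(with vertices `p 0, …, p l` and edges `pe 0, …, pe (l-1)`, `pe t = h_{t+1}` in the paper's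
1-based labelling) into induced subgraphs `G₁` (on `W₁`, bipartite) and `G₂` (on `W₂`),
where every interior vertex of `P` has degree `2` in `G`.  Then
`I_G = (I_{G₁} + I_{G₂}) : f^∞`, where `f` is the squarefree monomial equal to the product
of the edge variables of `P` with even (1-based) index. -/
theorem toric_splittings_stmt19 {V E : Type*} (K : Type*) [Field K]
    (ε : E → Sym2 V) (hinj : Function.Injective ε) (hnd : ∀ e, ¬ (ε e).IsDiag)
    (l : ℕ) (hl : 0 < l) (p : Fin (l + 1) → V) (hp : Function.Injective p)
    (pe : Fin l → E) (hpe : ∀ t : Fin l, ε (pe t) = s(p t.castSucc, p t.succ))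
    (W₁ W₂ : Set V)
    (hcover : W₁ ∪ W₂ = Set.univ) (hint : W₁ ∩ W₂ = Set.range p)
    (hedges : ∀ e : E, (∀ x ∈ ε e, x ∈ W₁) ∨ (∀ x ∈ ε e, x ∈ W₂))
    (hdeg : ∀ t : Fin (l + 1), t ≠ 0 → t ≠ Fin.last l →
      Nat.card {e : E // p t ∈ ε e} = 2)
    (hbip : ∃ c : V → Bool, ∀ e : E, (∀ x ∈ ε e, x ∈ W₁) →
      ∀ x y, ε e = s(x, y) → c x ≠ c y) :
    ∀ g : MvPolynomial E K,
      g ∈ graphToricIdeal K ε ↔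
        ∃ m : ℕ,
          (∏ t ∈ Finset.univ.filter (fun t : Fin l => Odd (t : ℕ)), X (pe t)) ^ m * g ∈
            Ideal.map (MvPolynomial.rename
                  (Subtype.val : {e : E // ∀ x ∈ ε e, x ∈ W₁} → E)).toRingHom
                (graphToricIdeal K (fun e : {e : E // ∀ x ∈ ε e, x ∈ W₁} => ε e.val)) ⊔
              Ideal.map (MvPolynomial.rename
                  (Subtype.val : {e : E // ∀ x ∈ ε e, x ∈ W₂} → E)).toRingHom
                (graphToricIdeal K (fun e : {e : E // ∀ x ∈ ε e, x ∈ W₂} => ε e.val)) :=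
  toric_splittings_stmt19_general K ε l hl p hp pe hpe W₁ W₂ hint hedges hdeg hbip
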